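/- Let n ∈ ℕ and let ℙ, ℚ be distributions over X^n. Then the sum over coordinates of expected conditional squared Hellinger distances satisfies E_{x∼ℙ}[ Σ_{i=1}^n H²(ℙ_i(·|x_{1:i−1}), ℚ_i(·|x_{1:i−1})) ] ≤ 4n · H²(ℙ, ℚ), where ℙ_i(·|x_{1:i−1}) and ℚ_i(·|x_{1:i−1}) are the conditional laws of x_i given the prefix. -/

import Mathlib

/-!
Fix a coordinate `i` and view `x ↦ (x_{<i}, x_i)` as a pair `(B, C)`. By data processing,
`H²` of the law of `(B, C)` under `P` and `Q`, and of the law of `B` alone, are at most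
`H²(P, Q)`. Writing `√P(b,c) - √(P(b) Q(c|b)) = (√P(b,c) - √Q(b,c)) + (√Q(b) - √P(b)) √Q(c|b)`
and using `(u + v)² ≤ 2u² + 2v²` bounds `E_P H²(P(·|B), Q(·|B))` by `2H² + 2H² = 4H²(P, Q)`;
summing over the `n` coordinates gives `4n H²(P, Q)`.
-/

open Finset Real

section FiniteHellinger

variable {ι α β γ : Type*}

lemma sq_sqrt_sum_sub_sqrt_sum_le (s : Finset ι) {p q : ι → ℝ} (hp : ∀ i, 0 ≤ p i)
    (hq : ∀ i, 0 ≤ q i) :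
    (√(∑ i ∈ s, p i) - √(∑ i ∈ s, q i)) ^ 2 ≤ ∑ i ∈ s, (√(p i) - √(q i)) ^ 2 := by
  have sq_sqrt_sub {a b : ℝ} (ha : 0 ≤ a) (hb : 0 ≤ b) :
      (√a - √b) ^ 2 = a + b - 2 * (√a * √b) := by
    rw [sub_sq, sq_sqrt ha, sq_sqrt hb]; ring
  rw [sq_sqrt_sub (sum_nonneg fun i _ => hp i) (sum_nonneg fun i _ => hq i),
    sum_congr rfl fun i _ => sq_sqrt_sub (hp i) (hq i), sum_sub_distrib, sum_add_distrib,
    ← mul_sum]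
  linarith [sum_sqrt_mul_sqrt_le s hp hq]

lemma sqrt_eq_sqrt_mul_sqrt_div {x s : ℝ} (hx : 0 ≤ x) (hxs : x ≤ s) :
    √x = √s * √(x / s) := by
  rcases (hx.trans hxs).eq_or_lt with hs | hs
  · obtain rfl : x = 0 := le_antisymm (hs ▸ hxs) hx
    simp
  · rw [← sqrt_mul hs.le, mul_div_cancel₀ _ hs.ne']

/-- Finite form of `H²(p, ‖p‖ · q/‖q‖) ≤ 4 H²(p, q)`. -/
lemma sum_mul_sum_sq_sqrt_div_sub_le (s : Finset ι) {p q : ι → ℝ} (hp : ∀ i, 0 ≤ p i)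
    (hq : ∀ i, 0 ≤ q i) :
    (∑ i ∈ s, p i) * ∑ i ∈ s, (√(p i / ∑ j ∈ s, p j) - √(q i / ∑ j ∈ s, q j)) ^ 2 ≤
      4 * ∑ i ∈ s, (√(p i) - √(q i)) ^ 2 := by
  set P := ∑ j ∈ s, p j
  set Q := ∑ j ∈ s, q j
  set H := ∑ i ∈ s, (√(p i) - √(q i)) ^ 2
  have hPQ : (√Q - √P) ^ 2 ≤ H := by
    rw [sub_sq_comm]; exact sq_sqrt_sum_sub_sqrt_sum_le s hp hq
  have ht : ∑ i ∈ s, √(q i / Q) ^ 2 ≤ 1 := by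
    rw [sum_congr rfl fun i _ => sq_sqrt (div_nonneg (hq i) (sum_nonneg fun j _ => hq j)),
      ← sum_div]
    exact div_self_le_one Q
  -- `√p = √P √(p/P)` and `√q = √Q √(q/Q)` split the error into the joint and the marginal part
  have hsplit : ∀ i ∈ s, √P * (√(p i / P) - √(q i / Q)) =
      (√(p i) - √(q i)) + (√Q - √P) * √(q i / Q) := by
    intro i hi
    rw [sqrt_eq_sqrt_mul_sqrt_div (hp i) (single_le_sum (fun j _ => hp j) hi),
      sqrt_eq_sqrt_mul_sqrt_div (hq i) (single_le_sum (fun j _ => hq j) hi)]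
    ring
  calc P * ∑ i ∈ s, (√(p i / P) - √(q i / Q)) ^ 2
      = ∑ i ∈ s, (√P * (√(p i / P) - √(q i / Q))) ^ 2 := by
        rw [mul_sum]
        exact sum_congr rfl fun i _ => by rw [mul_pow, sq_sqrt (sum_nonneg fun j _ => hp j)]
    _ = ∑ i ∈ s, ((√(p i) - √(q i)) + (√Q - √P) * √(q i / Q)) ^ 2 := sum_congr rfl
        fun i hi => by rw [hsplit i hi]
    _ ≤ ∑ i ∈ s, 2 * ((√(p i) - √(q i)) ^ 2 + (√Q - √P) ^ 2 * √(q i / Q) ^ 2) :=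
        sum_le_sum fun i _ => by rw [← mul_pow]; exact add_sq_le
    _ = 2 * H + 2 * ((√Q - √P) ^ 2 * ∑ i ∈ s, √(q i / Q) ^ 2) := by
        rw [← mul_sum, sum_add_distrib, ← mul_sum, mul_add]
    _ ≤ 2 * H + 2 * (H * 1) := by gcongr
    _ = 4 * H := by ring

variable [Fintype α] [DecidableEq β]

def fiberSum (f : α → β) (R : α → ℝ) (b : β) : ℝ :=
  ∑ a with f a = b, R a

lemma sum_mul_comp_eq_sum_fiberSum_mul [Fintype β] (f : α → β) (R : α → ℝ) (F : β → ℝ) :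
    ∑ a, R a * F (f a) = ∑ b, fiberSum f R b * F b := by
  rw [← sum_fiberwise univ f]
  refine sum_congr rfl fun b _ => ?_
  rw [fiberSum, sum_mul]
  exact sum_congr rfl fun a ha => by rw [(mem_filter.1 ha).2]

lemma fiberSum_eq_sum_fiberSum_prodMk [Fintype γ] [DecidableEq γ] (f : α → β) (g : α → γ)
    (R : α → ℝ) (b : β) :
    fiberSum f R b = ∑ c, fiberSum (fun a => (f a, g a)) R (b, c) := by
  simp only [fiberSum, Prod.mk.injEq, ← filter_filter]
  exact (sum_fiberwise _ g R).symm

lemma sum_sq_sqrt_fiberSum_sub_le [Fintype β] (f : α → β) {P Q : α → ℝ} (hP : ∀ a, 0 ≤ P a)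
    (hQ : ∀ a, 0 ≤ Q a) :
    ∑ b, (√(fiberSum f P b) - √(fiberSum f Q b)) ^ 2 ≤ ∑ a, (√(P a) - √(Q a)) ^ 2 :=
  calc ∑ b, (√(fiberSum f P b) - √(fiberSum f Q b)) ^ 2
      ≤ ∑ b, ∑ a with f a = b, (√(P a) - √(Q a)) ^ 2 :=
        sum_le_sum fun _ _ => sq_sqrt_sum_sub_sqrt_sum_le _ hP hQ
    _ = ∑ a, (√(P a) - √(Q a)) ^ 2 := sum_fiberwise univ f _

/-- Finite form of `E_{x ∼ P} H²(P_{Y|X=x}, Q_{Y|X=x}) ≤ 4 H²(P, Q)` for `X = f`, `Y = g`. -/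
lemma sum_mul_sum_sq_sqrt_cond_sub_le [Fintype β] [Fintype γ] [DecidableEq γ] (f : α → β)
    (g : α → γ) {P Q : α → ℝ} (hP : ∀ a, 0 ≤ P a) (hQ : ∀ a, 0 ≤ Q a) :
    ∑ a, P a * ∑ c, (√(fiberSum (fun a => (f a, g a)) P (f a, c) / fiberSum f P (f a)) -
        √(fiberSum (fun a => (f a, g a)) Q (f a, c) / fiberSum f Q (f a))) ^ 2 ≤
      4 * ∑ a, (√(P a) - √(Q a)) ^ 2 := by
  set φ : α → β × γ := fun a => (f a, g a)
  have hφ (R : α → ℝ) (hR : ∀ a, 0 ≤ R a) (x : β × γ) : 0 ≤ fiberSum φ R x :=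
    sum_nonneg fun a _ => hR a
  rw [sum_mul_comp_eq_sum_fiberSum_mul f P (fun b => ∑ c,
    (√(fiberSum φ P (b, c) / fiberSum f P b) - √(fiberSum φ Q (b, c) / fiberSum f Q b)) ^ 2)]
  simp only [fiberSum_eq_sum_fiberSum_prodMk f g]
  calc _ ≤ ∑ b, 4 * ∑ c, (√(fiberSum φ P (b, c)) - √(fiberSum φ Q (b, c))) ^ 2 :=
        sum_le_sum fun b _ =>
          sum_mul_sum_sq_sqrt_div_sub_le univ (fun c => hφ P hP (b, c)) (fun c => hφ Q hQ (b, c))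
    _ = 4 * ∑ x, (√(fiberSum φ P x) - √(fiberSum φ Q x)) ^ 2 := by
        rw [← mul_sum, Fintype.sum_prod_type]
    _ ≤ 4 * ∑ a, (√(P a) - √(Q a)) ^ 2 := by
        gcongr; exact sum_sq_sqrt_fiberSum_sub_le φ hP hQ

end FiniteHellinger

section Prefix

variable {X : Type*} [Fintype X] [DecidableEq X] {n : ℕ}

def restrictLt (k : ℕ) (x : Fin n → X) : {j : Fin n // (j : ℕ) < k} → X :=
  fun j => x j

lemma sum_ite_prefix_eq_fiberSum (R : (Fin n → X) → ℝ) (k : ℕ) (x : Fin n → X) :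
    (∑ w : Fin n → X, if ∀ j : Fin n, (j : ℕ) < k → w j = x j then R w else 0) =
      fiberSum (restrictLt k) R (restrictLt k x) := by
  rw [fiberSum, sum_filter]
  refine sum_congr rfl fun w _ => if_congr ?_ rfl rfl
  simp [restrictLt, funext_iff]

lemma sum_ite_prefix_update_eq_fiberSum (R : (Fin n → X) → ℝ) (i : Fin n) (x : Fin n → X)
    (a : X) :
    (∑ w : Fin n → X,
        if ∀ j : Fin n, (j : ℕ) < i + 1 → w j = Function.update x i a j then R w else 0) =
      fiberSum (fun w => (restrictLt i w, w i)) R (restrictLt i x, a) := by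
  rw [fiberSum, sum_filter]
  refine sum_congr rfl fun w _ => if_congr ?_ rfl rfl
  simp only [Nat.lt_succ_iff_lt_or_eq, or_imp, forall_and, Prod.mk.injEq, funext_iff,
    restrictLt, Subtype.forall, Fin.val_inj, forall_eq, Function.update_self]
  refine and_congr_left' (forall₂_congr fun j hj => ?_)
  rw [Function.update_of_ne (Fin.val_ne_iff.1 hj.ne)]

end Prefix

theorem hellinger_reverse_chain_bound {X : Type} [Fintype X] [DecidableEq X] (n : ℕ)
    (P Q : (Fin n → X) → ℝ)
    (hP0 : ∀ w, 0 ≤ P w) (hQ0 : ∀ w, 0 < Q w) :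
    let pref := fun (R : (Fin n → X) → ℝ) (i : ℕ) (x : Fin n → X) =>
      ∑ w : Fin n → X, if ∀ j : Fin n, (j : ℕ) < i → w j = x j then R w else 0
    let cond := fun (R : (Fin n → X) → ℝ) (i : Fin n) (x : Fin n → X) (a : X) =>
      pref R ((i : ℕ) + 1) (Function.update x i a) / pref R (i : ℕ) x
    (∑ x, P x * ∑ i : Fin n, ∑ a : X,
        (Real.sqrt (cond P i x a) - Real.sqrt (cond Q i x a)) ^ 2) ≤
      4 * n * ∑ w, (Real.sqrt (P w) - Real.sqrt (Q w)) ^ 2 := by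
  intro pref cond
  have hcoord (i : Fin n) : ∑ x, P x * ∑ a, (√(cond P i x a) - √(cond Q i x a)) ^ 2 ≤
      4 * ∑ w, (√(P w) - √(Q w)) ^ 2 := by
    -- the numerators first: `sum_ite_prefix_eq_fiberSum` would also match them
    simp only [cond, pref, sum_ite_prefix_update_eq_fiberSum]
    simp only [sum_ite_prefix_eq_fiberSum]
    exact sum_mul_sum_sq_sqrt_cond_sub_le (restrictLt i) (· i) hP0 fun w => (hQ0 w).le
  calc _ = ∑ i : Fin n, ∑ x, P x * ∑ a, (√(cond P i x a) - √(cond Q i x a)) ^ 2 := by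
        simp only [mul_sum]; exact sum_comm
    _ ≤ ∑ _i : Fin n, 4 * ∑ w, (√(P w) - √(Q w)) ^ 2 := sum_le_sum fun i _ => hcoord i
    _ = _ := by rw [sum_const, card_univ, Fintype.card_fin, nsmul_eq_mul]; ring
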